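/- arXiv:1809.01782 — 3 statements merged into one kernel-verified Lean document; each statement's English description precedes it below -/
import Mathlib

section
/- Fix α ∈ (0,2) and t ∈ (0,1). The function p ↦ (t^p − 1)(1 − t^{α−1−p}) is differentiable with derivative (t^{α−1−p} − t^p)·|log t|, and it is strictly increasing in p on the interval ((α−1)/2, ∞). Consequently, the function p ↦ γ(α,p) = ∫₀¹ (t^p−1)(1−t^{α−p−1})(1−t)^{−1−α} dt is strictly increasing on ((α−1)/2, α). -/
open Real MeasureTheory Set

private lemma stmt8_deriv {α t : ℝ} (ht : t ∈ Set.Ioo (0:ℝ) 1) (p : ℝ) :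
    HasDerivAt (fun q : ℝ => (t ^ q - 1) * (1 - t ^ (α - 1 - q)))
      ((t ^ (α - 1 - p) - t ^ p) * |Real.log t|) p := by
  obtain ⟨h0, h1⟩ := ht
  have hlog : Real.log t < 0 := Real.log_neg h0 h1
  have hf : HasDerivAt (fun q : ℝ => t ^ q - 1) (t ^ p * Real.log t) p :=
    ((Real.hasStrictDerivAt_const_rpow h0 p).hasDerivAt).sub_const 1
  have hinner : HasDerivAt (fun q : ℝ => α - 1 - q) (-1) p := by
    simpa using (hasDerivAt_id p).const_sub (α - 1)
  have hg0 : HasDerivAt (fun q : ℝ => t ^ (α - 1 - q))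
      (t ^ (α - 1 - p) * Real.log t * (-1)) p :=
    ((Real.hasStrictDerivAt_const_rpow h0 (α - 1 - p)).hasDerivAt).comp p hinner
  have hg : HasDerivAt (fun q : ℝ => 1 - t ^ (α - 1 - q))
      (t ^ (α - 1 - p) * Real.log t) p := by
    simpa using hg0.const_sub 1
  have := hf.mul hg
  refine this.congr_deriv ?_
  rw [abs_of_neg hlog]
  ring

private lemma stmt8_mono {α t : ℝ} (ht : t ∈ Set.Ioo (0:ℝ) 1) :
    StrictMonoOn (fun q : ℝ => (t ^ q - 1) * (1 - t ^ (α - 1 - q)))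
      (Set.Ioi ((α - 1) / 2)) := by
  apply strictMonoOn_of_deriv_pos (convex_Ioi _)
  · exact fun x _ => (stmt8_deriv ht x).continuousAt.continuousWithinAt
  · intro x hx
    rw [interior_Ioi] at hx
    rw [(stmt8_deriv ht x).deriv]
    have hlt : t ^ x < t ^ (α - 1 - x) :=
      Real.rpow_lt_rpow_of_exponent_gt ht.1 ht.2 (by simp only [Set.mem_Ioi] at hx; linarith)
    have hlog : Real.log t < 0 := Real.log_neg ht.1 ht.2
    exact mul_pos (sub_pos.mpr hlt) (abs_pos.mpr hlog.ne)

/-- Lipschitz-type bound for `t ^ a` near 1. -/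
private lemma stmt8_rpow_bound (a : ℝ) {t : ℝ} (ht : t ∈ Set.Icc (1/2 : ℝ) 1) :
    |t ^ a - 1| ≤ (|a| * max ((1/2 : ℝ) ^ (a - 1)) 1) * (1 - t) := by
  set C : ℝ := |a| * max ((1/2 : ℝ) ^ (a - 1)) 1 with hC
  have key : ∀ x ∈ Set.Icc (1/2 : ℝ) 1, ∀ y ∈ Set.Icc (1/2 : ℝ) 1,
      ‖x ^ a - y ^ a‖ ≤ C * ‖x - y‖ := by
    intro x hx y hy
    have hderiv : ∀ z ∈ Set.Icc (1/2 : ℝ) 1,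
        HasDerivWithinAt (fun u : ℝ => u ^ a) (a * z ^ (a - 1)) (Set.Icc (1/2 : ℝ) 1) z := by
      intro z hz
      exact (Real.hasDerivAt_rpow_const (Or.inl (by linarith [hz.1] : z ≠ 0))).hasDerivWithinAt
    have hbound : ∀ z ∈ Set.Icc (1/2 : ℝ) 1, ‖a * z ^ (a - 1)‖ ≤ C := by
      intro z hz
      have hz0 : (0:ℝ) < z := by linarith [hz.1]
      rw [norm_mul, Real.norm_eq_abs, Real.norm_eq_abs,
        abs_of_nonneg (Real.rpow_nonneg hz0.le _)]
      rcases le_or_gt (a - 1) 0 with h | h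
      · exact mul_le_mul_of_nonneg_left
          (le_trans (Real.rpow_le_rpow_of_nonpos one_half_pos hz.1 h) (le_max_left _ _))
          (abs_nonneg a)
      · exact mul_le_mul_of_nonneg_left
          (le_trans (Real.rpow_le_one hz0.le hz.2 h.le) (le_max_right _ _)) (abs_nonneg a)
    exact (convex_Icc _ _).norm_image_sub_le_of_norm_hasDerivWithin_le hderiv hbound hy hx
  have h1 := key t ht 1 (by constructor <;> norm_num)
  rw [Real.one_rpow] at h1
  calc |t ^ a - 1| ≤ C * ‖t - 1‖ := h1
    _ = C * (1 - t) := by rw [Real.norm_eq_abs, abs_sub_comm, abs_of_nonneg (by linarith [ht.2])]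

private lemma stmt8_int0 {α p : ℝ} (hα : α ∈ Set.Ioo (0:ℝ) 2)
    (hp : p ∈ Set.Ioo ((α - 1) / 2) α) :
    IntegrableOn (fun t : ℝ => (t ^ p - 1) * (1 - t ^ (α - p - 1)) / (1 - t) ^ (1 + α))
      (Set.Ioc (0:ℝ) (1/2)) := by
  obtain ⟨hα0, hα2⟩ := hα
  obtain ⟨hp1, hp2⟩ := hp
  have hmeas : AEStronglyMeasurable
      (fun t : ℝ => (t ^ p - 1) * (1 - t ^ (α - p - 1)) / (1 - t) ^ (1 + α))
      (volume.restrict (Set.Ioc (0:ℝ) (1/2))) := by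
    apply ContinuousOn.aestronglyMeasurable _ measurableSet_Ioc
    apply ContinuousOn.div
    · exact ((continuousOn_id.rpow_const fun x hx => Or.inl (ne_of_gt hx.1)).sub
        continuousOn_const).mul (continuousOn_const.sub
        (continuousOn_id.rpow_const fun x hx => Or.inl (ne_of_gt hx.1)))
    · exact (continuousOn_const.sub continuousOn_id).rpow_const
        fun x hx => Or.inl (by show (1:ℝ) - x ≠ 0; intro h; nlinarith [hx.2])
    · intro x hx
      exact ne_of_gt (Real.rpow_pos_of_pos (by linarith [hx.2]) _)
  have hgint : IntegrableOn
      (fun t : ℝ => (2:ℝ) ^ (1 + α) * (t ^ p + t ^ (α - 1) + 1 + t ^ (α - p - 1)))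
      (Set.Ioc (0:ℝ) (1/2)) := by
    apply Integrable.const_mul
    have h1 : IntegrableOn (fun t : ℝ => t ^ p) (Set.Ioc (0:ℝ) (1/2)) :=
      (intervalIntegrable_iff_integrableOn_Ioc_of_le (by norm_num)).mp
        (intervalIntegral.intervalIntegrable_rpow' (by linarith))
    have h2 : IntegrableOn (fun t : ℝ => t ^ (α - 1)) (Set.Ioc (0:ℝ) (1/2)) :=
      (intervalIntegrable_iff_integrableOn_Ioc_of_le (by norm_num)).mp
        (intervalIntegral.intervalIntegrable_rpow' (by linarith))
    have h3 : IntegrableOn (fun t : ℝ => t ^ (α - p - 1)) (Set.Ioc (0:ℝ) (1/2)) :=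
      (intervalIntegrable_iff_integrableOn_Ioc_of_le (by norm_num)).mp
        (intervalIntegral.intervalIntegrable_rpow' (by linarith))
    exact ((h1.add h2).add (integrableOn_const measure_Ioc_lt_top.ne)).add h3
  apply Integrable.mono hgint hmeas
  rw [ae_restrict_iff' measurableSet_Ioc]
  apply ae_of_all
  intro t ht
  have ht0 : (0:ℝ) < t := ht.1
  have ht1 : t ≤ 1/2 := ht.2
  have hsub : (0:ℝ) < 1 - t := by linarith
  have hdenpos : (0:ℝ) < (1 - t) ^ (1 + α) := Real.rpow_pos_of_pos hsub _
  have hden : ((2:ℝ) ^ (1 + α))⁻¹ ≤ (1 - t) ^ (1 + α) := by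
    have := Real.rpow_le_rpow (by norm_num : (0:ℝ) ≤ 1/2) (by linarith : (1:ℝ)/2 ≤ 1 - t)
      (by linarith : (0:ℝ) ≤ 1 + α)
    rwa [one_div, Real.inv_rpow (by norm_num : (0:ℝ) ≤ 2)] at this
  have hnum : |(t ^ p - 1) * (1 - t ^ (α - p - 1))|
      ≤ t ^ p + t ^ (α - 1) + 1 + t ^ (α - p - 1) := by
    have hexp : t ^ p * t ^ (α - p - 1) = t ^ (α - 1) := by
      rw [← Real.rpow_add ht0]; ring_nf
    calc |(t ^ p - 1) * (1 - t ^ (α - p - 1))|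
        = |t ^ p - t ^ (α - 1) - 1 + t ^ (α - p - 1)| := by rw [← hexp]; ring_nf
      _ ≤ |t ^ p - t ^ (α - 1) - 1| + |t ^ (α - p - 1)| := abs_add_le _ _
      _ ≤ |t ^ p - t ^ (α - 1)| + |(1:ℝ)| + |t ^ (α - p - 1)| := by
            linarith [abs_sub (t ^ p - t ^ (α - 1)) (1:ℝ)]
      _ ≤ |t ^ p| + |t ^ (α - 1)| + |(1:ℝ)| + |t ^ (α - p - 1)| := by
            linarith [abs_sub (t ^ p) (t ^ (α - 1))]
      _ = t ^ p + t ^ (α - 1) + 1 + t ^ (α - p - 1) := by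
            rw [abs_of_nonneg (Real.rpow_nonneg ht0.le _),
              abs_of_nonneg (Real.rpow_nonneg ht0.le _),
              abs_of_nonneg (Real.rpow_nonneg ht0.le _), abs_one]
  have hSnn : 0 ≤ t ^ p + t ^ (α - 1) + 1 + t ^ (α - p - 1) := by
    have := Real.rpow_nonneg ht0.le p
    have := Real.rpow_nonneg ht0.le (α - 1)
    have := Real.rpow_nonneg ht0.le (α - p - 1)
    linarith
  have hCpos : (0:ℝ) < (2:ℝ) ^ (1 + α) := Real.rpow_pos_of_pos (by norm_num) _
  simp only [Real.norm_eq_abs, abs_div, abs_of_nonneg hdenpos.le,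
    abs_of_nonneg (mul_nonneg hCpos.le hSnn)]
  rw [div_le_iff₀ hdenpos]
  calc |(t ^ p - 1) * (1 - t ^ (α - p - 1))|
      ≤ t ^ p + t ^ (α - 1) + 1 + t ^ (α - p - 1) := hnum
    _ = (2:ℝ) ^ (1 + α) * (t ^ p + t ^ (α - 1) + 1 + t ^ (α - p - 1)) * ((2:ℝ) ^ (1 + α))⁻¹ := by
          field_simp
    _ ≤ (2:ℝ) ^ (1 + α) * (t ^ p + t ^ (α - 1) + 1 + t ^ (α - p - 1)) * (1 - t) ^ (1 + α) :=
          mul_le_mul_of_nonneg_left hden (mul_nonneg hCpos.le hSnn)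

private lemma stmt8_int1 {α p : ℝ} (hα : α ∈ Set.Ioo (0:ℝ) 2)
    (hp : p ∈ Set.Ioo ((α - 1) / 2) α) :
    IntegrableOn (fun t : ℝ => (t ^ p - 1) * (1 - t ^ (α - p - 1)) / (1 - t) ^ (1 + α))
      (Set.Ioo (1/2 : ℝ) 1) := by
  obtain ⟨hα0, hα2⟩ := hα
  set C1 : ℝ := |p| * max ((1/2 : ℝ) ^ (p - 1)) 1 with hC1
  set C2 : ℝ := |α - p - 1| * max ((1/2 : ℝ) ^ (α - p - 1 - 1)) 1 with hC2
  have hC1nn : 0 ≤ C1 := mul_nonneg (abs_nonneg _) (le_trans zero_le_one (le_max_right _ _))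
  have hC2nn : 0 ≤ C2 := mul_nonneg (abs_nonneg _) (le_trans zero_le_one (le_max_right _ _))
  have hmeas : AEStronglyMeasurable
      (fun t : ℝ => (t ^ p - 1) * (1 - t ^ (α - p - 1)) / (1 - t) ^ (1 + α))
      (volume.restrict (Set.Ioo (1/2 : ℝ) 1)) := by
    apply ContinuousOn.aestronglyMeasurable _ measurableSet_Ioo
    apply ContinuousOn.div
    · exact ((continuousOn_id.rpow_const fun x hx => Or.inl (by linarith [hx.1] : x ≠ 0)).sub
        continuousOn_const).mul (continuousOn_const.sub
        (continuousOn_id.rpow_const fun x hx => Or.inl (by linarith [hx.1] : x ≠ 0)))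
    · exact (continuousOn_const.sub continuousOn_id).rpow_const
        fun x hx => Or.inl (by show (1:ℝ) - x ≠ 0; intro h; nlinarith [hx.2])
    · intro x hx
      exact ne_of_gt (Real.rpow_pos_of_pos (by linarith [hx.2]) _)
  have hgint : IntegrableOn (fun t : ℝ => C1 * C2 * (1 - t) ^ (1 - α))
      (Set.Ioo (1/2 : ℝ) 1) := by
    apply Integrable.const_mul
    have h : IntervalIntegrable (fun u : ℝ => u ^ (1 - α)) volume 0 (1/2) :=
      intervalIntegral.intervalIntegrable_rpow' (by linarith)
    have h3 : IntervalIntegrable (fun t : ℝ => (1 - t) ^ (1 - α)) volume (1/2) 1 := by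
      have h2 := (h.comp_sub_left 1).symm
      norm_num at h2 ⊢
      exact h2
    exact ((intervalIntegrable_iff_integrableOn_Ioc_of_le (by norm_num)).mp h3).mono_set
      Set.Ioo_subset_Ioc_self
  apply Integrable.mono hgint hmeas
  rw [ae_restrict_iff' measurableSet_Ioo]
  apply ae_of_all
  intro t ht
  have ht' : t ∈ Set.Icc (1/2 : ℝ) 1 := ⟨ht.1.le, ht.2.le⟩
  have hsub : (0:ℝ) < 1 - t := by linarith [ht.2]
  have hdenpos : (0:ℝ) < (1 - t) ^ (1 + α) := Real.rpow_pos_of_pos hsub _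
  have hb1 : |t ^ p - 1| ≤ C1 * (1 - t) := stmt8_rpow_bound p ht'
  have hb2 : |1 - t ^ (α - p - 1)| ≤ C2 * (1 - t) := by
    rw [abs_sub_comm]; exact stmt8_rpow_bound (α - p - 1) ht'
  have hkey : (1 - t) * (1 - t) / (1 - t) ^ (1 + α) = (1 - t) ^ (1 - α) := by
    rw [div_eq_iff (ne_of_gt hdenpos), ← Real.rpow_add hsub,
      show (1 - α + (1 + α) : ℝ) = ((2:ℕ):ℝ) by push_cast; ring, Real.rpow_natCast]
    ring
  have hnum : |(t ^ p - 1) * (1 - t ^ (α - p - 1))| ≤ C1 * C2 * ((1 - t) * (1 - t)) := by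
    rw [abs_mul]
    calc |t ^ p - 1| * |1 - t ^ (α - p - 1)| ≤ (C1 * (1 - t)) * (C2 * (1 - t)) :=
          mul_le_mul hb1 hb2 (abs_nonneg _) (le_trans (abs_nonneg _) hb1)
      _ = C1 * C2 * ((1 - t) * (1 - t)) := by ring
  simp only [Real.norm_eq_abs, abs_div, abs_of_nonneg hdenpos.le,
    abs_of_nonneg (mul_nonneg (mul_nonneg hC1nn hC2nn) (Real.rpow_nonneg hsub.le _))]
  calc |(t ^ p - 1) * (1 - t ^ (α - p - 1))| / (1 - t) ^ (1 + α)
      ≤ C1 * C2 * ((1 - t) * (1 - t)) / (1 - t) ^ (1 + α) :=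
        div_le_div_of_nonneg_right hnum hdenpos.le
    _ = C1 * C2 * ((1 - t) * (1 - t) / (1 - t) ^ (1 + α)) := by ring
    _ = C1 * C2 * (1 - t) ^ (1 - α) := by rw [hkey]

private lemma stmt8_integrable {α p : ℝ} (hα : α ∈ Set.Ioo (0:ℝ) 2)
    (hp : p ∈ Set.Ioo ((α - 1) / 2) α) :
    IntegrableOn (fun t : ℝ => (t ^ p - 1) * (1 - t ^ (α - p - 1)) / (1 - t) ^ (1 + α))
      (Set.Ioo (0:ℝ) 1) := by
  have hsplit : Set.Ioo (0:ℝ) 1 = Set.Ioc (0:ℝ) (1/2) ∪ Set.Ioo (1/2 : ℝ) 1 := by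
    rw [Set.Ioc_union_Ioo_eq_Ioo] <;> norm_num
  rw [hsplit]
  exact (stmt8_int0 hα hp).union (stmt8_int1 hα hp)

theorem stmt8 (α : ℝ) (hα : α ∈ Set.Ioo (0:ℝ) 2) :
    (∀ t ∈ Set.Ioo (0:ℝ) 1, ∀ p : ℝ,
      HasDerivAt (fun q : ℝ => (t ^ q - 1) * (1 - t ^ (α - 1 - q)))
        ((t ^ (α - 1 - p) - t ^ p) * |Real.log t|) p) ∧
    (∀ t ∈ Set.Ioo (0:ℝ) 1,
      StrictMonoOn (fun q : ℝ => (t ^ q - 1) * (1 - t ^ (α - 1 - q)))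
        (Set.Ioi ((α - 1) / 2))) ∧
    StrictMonoOn (fun p : ℝ =>
        ∫ t in Set.Ioo (0:ℝ) 1, (t ^ p - 1) * (1 - t ^ (α - p - 1)) / (1 - t) ^ (1 + α))
      (Set.Ioo ((α - 1) / 2) α) := by
  refine ⟨fun t ht p => stmt8_deriv ht p, fun t ht => stmt8_mono ht, ?_⟩
  intro p hp q hq hpq
  have hptwise : ∀ t ∈ Set.Ioo (0:ℝ) 1,
      (t ^ p - 1) * (1 - t ^ (α - p - 1)) / (1 - t) ^ (1 + α)
        < (t ^ q - 1) * (1 - t ^ (α - q - 1)) / (1 - t) ^ (1 + α) := by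
    intro t ht
    have hsub : (0:ℝ) < 1 - t := by linarith [ht.2]
    have hdenpos : (0:ℝ) < (1 - t) ^ (1 + α) := Real.rpow_pos_of_pos hsub _
    have hm := stmt8_mono (α := α) ht (Set.mem_Ioi.mpr hp.1) (Set.mem_Ioi.mpr hq.1) hpq
    simp only [] at hm
    rw [show α - 1 - p = α - p - 1 by ring, show α - 1 - q = α - q - 1 by ring] at hm
    exact (div_lt_div_iff_of_pos_right hdenpos).mpr hm
  have hip := stmt8_integrable hα hp
  have hiq := stmt8_integrable hα hq
  simp only []
  rw [← sub_pos, ← MeasureTheory.integral_sub hiq hip]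
  rw [MeasureTheory.setIntegral_pos_iff_support_of_nonneg_ae]
  · refine lt_of_lt_of_le ?_ (measure_mono (s := Set.Ioo (0:ℝ) 1) (fun t ht =>
      ⟨sub_ne_zero.mpr (hptwise t ht).ne', ht⟩))
    simp [Real.volume_Ioo]
  · refine (ae_restrict_iff' measurableSet_Ioo).mpr (ae_of_all _ fun t ht => ?_)
    simpa using sub_nonneg.mpr (hptwise t ht).le
  · exact hiq.sub hip
end

section
/- For every α ∈ (0,2), γ(α, p) := ∫₀¹ (t^p − 1)(1 − t^{α−p−1})/(1−t)^{1+α} dt tends to +∞ as p ↑ α. More precisely, lim_{p → α⁻} γ(α,p) = ∞. -/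
open MeasureTheory Set Filter

set_option maxHeartbeats 1000000 in
theorem stmt9 (α : ℝ) (hα : α ∈ Set.Ioo (0:ℝ) 2) :
    Filter.Tendsto (fun p : ℝ =>
        ∫ t in Set.Ioo (0:ℝ) 1, (t ^ p - 1) * (1 - t ^ (α - p - 1)) / (1 - t) ^ (1 + α))
      (nhdsWithin α (Set.Iio α)) Filter.atTop := by
  obtain ⟨hα0, hα2⟩ := hα
  set p₀ : ℝ := max (α - 1) (α / 2) with hp₀def
  have hp₀pos : 0 < p₀ := lt_of_lt_of_le (by linarith) (le_max_right _ _)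
  have hp₀lt : p₀ < α := max_lt (by linarith) (by linarith)
  set c : ℝ := 1 - (1/2 : ℝ) ^ p₀ with hcdef
  have hc : 0 < c := by
    have h : (1/2:ℝ) ^ p₀ < 1 := Real.rpow_lt_one (by norm_num) (by norm_num) hp₀pos
    rw [hcdef]; linarith
  -- the key eventual lower bound
  have key : ∀ p ∈ Set.Ioo p₀ α,
      c/2 * (α - p)⁻¹ - c/2 ≤
        ∫ t in Set.Ioo (0:ℝ) 1, (t ^ p - 1) * (1 - t ^ (α - p - 1)) / (1 - t) ^ (1 + α) := by
    intro p hp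
    obtain ⟨hp1, hp2⟩ := hp
    have hppos : 0 < p := hp₀pos.trans hp1
    have hplt2 : p < 2 := hp2.trans hα2
    set β : ℝ := α - p - 1 with hβdef
    have hβ1 : -1 < β := by simp only [hβdef]; linarith
    have hβ0 : β < 0 := by
      have : α - 1 ≤ p₀ := le_max_left _ _
      simp only [hβdef]; linarith
    set f : ℝ → ℝ := fun t => (t ^ p - 1) * (1 - t ^ β) / (1 - t) ^ (1 + α) with hfdef
    -- nonnegativity
    have hfnn : ∀ t ∈ Set.Ioo (0:ℝ) 1, 0 ≤ f t := by
      intro t ht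
      obtain ⟨ht0, ht1⟩ := ht
      have h1 : t ^ p ≤ 1 := Real.rpow_le_one ht0.le ht1.le hppos.le
      have h2 : (1:ℝ) ≤ t ^ β := Real.one_le_rpow_of_pos_of_le_one_of_nonpos ht0 ht1.le hβ0.le
      have h3 : (0:ℝ) < (1 - t) ^ (1 + α) := Real.rpow_pos_of_pos (by linarith) _
      exact div_nonneg (by nlinarith) h3.le
    -- continuity
    have hcont : ContinuousOn f (Set.Ioo (0:ℝ) 1) := by
      intro t ht
      obtain ⟨ht0, ht1⟩ := ht
      have hd : (0:ℝ) < 1 - t := by linarith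
      refine ContinuousWithinAt.div ?_ ?_ (Real.rpow_pos_of_pos hd _).ne'
      · exact (((Real.continuousAt_rpow_const t p (Or.inl ht0.ne')).sub continuousAt_const).mul
          (continuousAt_const.sub
            (Real.continuousAt_rpow_const t β (Or.inl ht0.ne')))).continuousWithinAt
      · exact ((continuousAt_const.sub continuousAt_id).rpow_const
          (Or.inl hd.ne')).continuousWithinAt
    -- integrability via a dominating function
    have hg1 : IntegrableOn (fun t : ℝ => t ^ β) (Set.Ioo (0:ℝ) 1) := by
      have h1 : IntervalIntegrable (fun t : ℝ => t ^ β) volume 0 1 :=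
        intervalIntegral.intervalIntegrable_rpow' hβ1
      have h2 : IntegrableOn (fun t : ℝ => t ^ β) (Set.Ioc (0:ℝ) 1) :=
        (intervalIntegrable_iff_integrableOn_Ioc_of_le (by norm_num : (0:ℝ) ≤ 1)).1 h1
      exact h2.mono_set Set.Ioo_subset_Ioc_self
    have hg2 : IntegrableOn (fun t : ℝ => (1 - t) ^ (1 - α)) (Set.Ioo (0:ℝ) 1) := by
      have h0 : (-1:ℝ) < 1 - α := by linarith
      have h1 := (intervalIntegral.intervalIntegrable_rpow' h0 (a := 0) (b := 1)).comp_sub_left 1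
      simp only [sub_self, sub_zero] at h1
      have h2 : IntervalIntegrable (fun t : ℝ => (1 - t) ^ (1 - α)) volume 0 1 := h1.symm
      have h3 : IntegrableOn (fun t : ℝ => (1 - t) ^ (1 - α)) (Set.Ioc (0:ℝ) 1) :=
        (intervalIntegrable_iff_integrableOn_Ioc_of_le (by norm_num : (0:ℝ) ≤ 1)).1 h2
      exact h3.mono_set Set.Ioo_subset_Ioc_self
    have hgint : IntegrableOn
        (fun t : ℝ => 2 ^ (1 + α) * t ^ β + 4 * (1 - t) ^ (1 - α)) (Set.Ioo (0:ℝ) 1) :=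
      (hg1.const_mul _).add (hg2.const_mul _)
    have hbound : ∀ t ∈ Set.Ioo (0:ℝ) 1,
        ‖f t‖ ≤ 2 ^ (1 + α) * t ^ β + 4 * (1 - t) ^ (1 - α) := by
      intro t ht
      obtain ⟨ht0, ht1⟩ := ht
      rw [Real.norm_eq_abs, abs_of_nonneg (hfnn t ⟨ht0, ht1⟩)]
      have hd : (0:ℝ) < 1 - t := by linarith
      have hD : (0:ℝ) < (1 - t) ^ (1 + α) := Real.rpow_pos_of_pos hd _
      have htp : t ^ p ≤ 1 := Real.rpow_le_one ht0.le ht1.le hppos.le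
      have htβ1 : (1:ℝ) ≤ t ^ β := Real.one_le_rpow_of_pos_of_le_one_of_nonpos ht0 ht1.le hβ0.le
      have hfform : f t = (1 - t ^ p) * (t ^ β - 1) / (1 - t) ^ (1 + α) := by
        simp only [hfdef]; ring
      have hβnn : (0:ℝ) ≤ t ^ β := Real.rpow_nonneg ht0.le _
      have h1α : (0:ℝ) ≤ 1 - α ∨ True := Or.inr trivial
      rcases le_or_gt t (1/2) with hle | hgt
      · -- small t : f t ≤ 2^(1+α) * t^β
        have hDge : ((1:ℝ)/2) ^ (1 + α) ≤ (1 - t) ^ (1 + α) :=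
          Real.rpow_le_rpow (by norm_num) (by linarith) (by linarith)
        have hnum : (1 - t ^ p) * (t ^ β - 1) ≤ t ^ β := by
          have h1 : 1 - t ^ p ≤ 1 := by
            have : (0:ℝ) ≤ t ^ p := Real.rpow_nonneg ht0.le _
            linarith
          have h2 : t ^ β - 1 ≤ t ^ β := by linarith
          nlinarith [htβ1]
        have hnumnn : (0:ℝ) ≤ (1 - t ^ p) * (t ^ β - 1) :=
          mul_nonneg (by linarith) (by linarith)
        have step : f t ≤ t ^ β / ((1:ℝ)/2) ^ (1 + α) := by
          rw [hfform]
          exact div_le_div₀ hβnn hnum (Real.rpow_pos_of_pos (by norm_num) _) hDge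
        have heq : t ^ β / ((1:ℝ)/2) ^ (1 + α) = 2 ^ (1 + α) * t ^ β := by
          rw [show ((1:ℝ)/2) = (2:ℝ)⁻¹ by norm_num,
            Real.inv_rpow (by norm_num : (0:ℝ) ≤ 2), div_eq_mul_inv, inv_inv, mul_comm]
        have hle2 : f t ≤ 2 ^ (1 + α) * t ^ β := heq ▸ step
        have hnn2 : (0:ℝ) ≤ 4 * (1 - t) ^ (1 - α) := by positivity
        linarith
      · -- large t : f t ≤ 4 * (1-t)^(1-α)
        have htsq2 : t * t ≤ t ^ p := by
          have htsq : t ^ (2:ℝ) ≤ t ^ p :=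
            Real.rpow_le_rpow_of_exponent_ge ht0 ht1.le hplt2.le
          rwa [show (2:ℝ) = ((2:ℕ):ℝ) by norm_num, Real.rpow_natCast, pow_two] at htsq
        have h1 : 1 - t ^ p ≤ 2 * (1 - t) := by nlinarith [htsq2, sq_nonneg (1 - t)]
        have hβle : t ^ β ≤ 2 := by
          have : t ^ β ≤ t ^ (-1:ℝ) := Real.rpow_le_rpow_of_exponent_ge ht0 ht1.le hβ1.le
          rw [Real.rpow_neg_one] at this
          have h2t : t⁻¹ ≤ 2 := by
            rw [inv_le_comm₀ ht0 (by norm_num)]; linarith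
          linarith
        have hmβ : t ^ (-β) ≥ t := by
          have : t ^ (1:ℝ) ≤ t ^ (-β) := by
            apply Real.rpow_le_rpow_of_exponent_ge ht0 ht1.le; linarith
          rwa [Real.rpow_one] at this
        have hmβ1 : t ^ (-β) ≤ 1 := Real.rpow_le_one ht0.le ht1.le (by linarith)
        have hprod : t ^ β * t ^ (-β) = 1 := by
          rw [← Real.rpow_add ht0]; simp
        have h2 : t ^ β - 1 ≤ 2 * (1 - t) := by
          have : t ^ β - 1 = t ^ β * (1 - t ^ (-β)) := by
            rw [mul_sub, hprod, mul_one]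
          rw [this]
          calc t ^ β * (1 - t ^ (-β)) ≤ 2 * (1 - t ^ (-β)) :=
                mul_le_mul_of_nonneg_right hβle (by linarith)
            _ ≤ 2 * (1 - t) := by linarith
        have hnum : (1 - t ^ p) * (t ^ β - 1) ≤ 4 * (1 - t) ^ 2 := by
          have hmm := mul_le_mul h1 h2 (by linarith) (by linarith)
          nlinarith [hmm]
        have hrw : 4 * (1 - t) ^ (1 - α) = 4 * (1 - t) ^ 2 / (1 - t) ^ (1 + α) := by
          rw [mul_div_assoc]
          congr 1
          rw [← Real.rpow_natCast (1 - t) 2, ← Real.rpow_sub hd]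
          congr 1
          push_cast
          ring
        have step : f t ≤ 4 * (1 - t) ^ (1 - α) := by
          rw [hfform, hrw]
          exact (div_le_div_iff_of_pos_right hD).2 hnum
        have hβpos : (0:ℝ) ≤ 2 ^ (1 + α) * t ^ β := by positivity
        linarith
    have hfint : IntegrableOn f (Set.Ioo (0:ℝ) 1) := by
      refine hgint.integrable.mono' (hcont.aestronglyMeasurable measurableSet_Ioo) ?_
      filter_upwards [ae_restrict_mem measurableSet_Ioo] with t ht using hbound t ht
    -- restrict to (0, 1/2)
    have mono1 : ∫ t in Set.Ioo (0:ℝ) (1/2), f t ≤ ∫ t in Set.Ioo (0:ℝ) 1, f t := by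
      refine setIntegral_mono_set hfint ?_
        ((Set.Ioo_subset_Ioo_right (by norm_num)).eventuallyLE)
      filter_upwards [ae_restrict_mem measurableSet_Ioo] with t ht using hfnn t ht
    -- pointwise lower bound on (0, 1/2)
    have hlowint : IntegrableOn (fun t : ℝ => c * t ^ β - c) (Set.Ioo (0:ℝ) (1/2)) := by
      refine Integrable.sub ?_ (integrableOn_const measure_Ioo_lt_top.ne)
      exact (hg1.mono_set (Set.Ioo_subset_Ioo_right (by norm_num))).const_mul c
    have mono2 : ∫ t in Set.Ioo (0:ℝ) (1/2), (c * t ^ β - c) ≤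
        ∫ t in Set.Ioo (0:ℝ) (1/2), f t := by
      refine setIntegral_mono_on hlowint
        (hfint.mono_set (Set.Ioo_subset_Ioo_right (by norm_num))) measurableSet_Ioo ?_
      intro t ht
      obtain ⟨ht0, ht12⟩ := ht
      have ht1 : t < 1 := by linarith
      have htβ1 : (1:ℝ) ≤ t ^ β := Real.one_le_rpow_of_pos_of_le_one_of_nonpos ht0 ht1.le hβ0.le
      have htp : t ^ p ≤ (1/2:ℝ) ^ p₀ := by
        calc t ^ p ≤ (1/2:ℝ) ^ p := Real.rpow_le_rpow ht0.le ht12.le hppos.le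
          _ ≤ (1/2:ℝ) ^ p₀ :=
            Real.rpow_le_rpow_of_exponent_ge (by norm_num) (by norm_num) hp1.le
      have hcle : c ≤ 1 - t ^ p := by simp only [hcdef]; linarith
      have hD1 : (1 - t) ^ (1 + α) ≤ 1 :=
        Real.rpow_le_one (by linarith) (by linarith) (by linarith)
      have hD0 : (0:ℝ) < (1 - t) ^ (1 + α) := Real.rpow_pos_of_pos (by linarith) _
      have hfform : f t = (1 - t ^ p) * (t ^ β - 1) / (1 - t) ^ (1 + α) := by
        simp only [hfdef]; ring
      have hnum : c * (t ^ β - 1) ≤ (1 - t ^ p) * (t ^ β - 1) :=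
        mul_le_mul_of_nonneg_right hcle (by linarith)
      have hstep : (1 - t ^ p) * (t ^ β - 1) ≤ (1 - t ^ p) * (t ^ β - 1) / (1 - t) ^ (1 + α) := by
        rw [le_div_iff₀ hD0]
        have hN : (0:ℝ) ≤ (1 - t ^ p) * (t ^ β - 1) := mul_nonneg (by linarith) (by linarith)
        exact mul_le_of_le_one_right hN hD1
      have heq2 : c * t ^ β - c = c * (t ^ β - 1) := by ring
      rw [heq2, hfform]
      exact hnum.trans hstep
    -- compute the lower integral
    have hcomp : ∫ t in Set.Ioo (0:ℝ) (1/2), (c * t ^ β - c)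
        = c * ((1/2:ℝ) ^ (α - p) / (α - p)) - c / 2 := by
      rw [← integral_Ioc_eq_integral_Ioo,
        ← intervalIntegral.integral_of_le (by norm_num : (0:ℝ) ≤ 1/2)]
      have hint1 : IntervalIntegrable (fun t : ℝ => c * t ^ β) volume 0 (1/2) :=
        (intervalIntegral.intervalIntegrable_rpow' hβ1).const_mul c
      have hint2 : IntervalIntegrable (fun _ : ℝ => c) volume 0 (1/2) :=
        intervalIntegrable_const
      rw [intervalIntegral.integral_sub hint1 hint2, intervalIntegral.integral_const_mul,
        intervalIntegral.integral_const, integral_rpow (Or.inl hβ1)]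
      have h0 : (0:ℝ) ^ (β + 1) = 0 := Real.zero_rpow (by linarith)
      rw [h0]
      have hβα : β + 1 = α - p := by simp only [hβdef]; ring
      rw [hβα, smul_eq_mul]
      ring
    -- final chain
    have hαp1 : α - p ≤ 1 := by
      have : α - 1 ≤ p₀ := le_max_left _ _
      linarith
    have hαp0 : 0 < α - p := by linarith
    have hhalf : (1/2:ℝ) ≤ (1/2:ℝ) ^ (α - p) := by
      have := Real.rpow_le_rpow_of_exponent_ge (by norm_num : (0:ℝ) < 1/2)
        (by norm_num : (1/2:ℝ) ≤ 1) hαp1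
      rwa [Real.rpow_one] at this
    have hfinal : c/2 * (α - p)⁻¹ - c/2 ≤ c * ((1/2:ℝ) ^ (α - p) / (α - p)) - c / 2 := by
      have h1 : c/2 * (α - p)⁻¹ = c * ((1/2:ℝ) / (α - p)) := by ring
      have h2 : c * ((1/2:ℝ) / (α - p)) ≤ c * ((1/2:ℝ) ^ (α - p) / (α - p)) := by
        gcongr
      linarith
    calc c/2 * (α - p)⁻¹ - c/2
        ≤ c * ((1/2:ℝ) ^ (α - p) / (α - p)) - c / 2 := hfinal
      _ = ∫ t in Set.Ioo (0:ℝ) (1/2), (c * t ^ β - c) := hcomp.symm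
      _ ≤ ∫ t in Set.Ioo (0:ℝ) (1/2), f t := mono2
      _ ≤ ∫ t in Set.Ioo (0:ℝ) 1, f t := mono1
  -- the lower-bound function tends to atTop
  have htend : Tendsto (fun p : ℝ => c/2 * (α - p)⁻¹ - c/2)
      (nhdsWithin α (Set.Iio α)) atTop := by
    apply tendsto_atTop_add_const_right
    apply Tendsto.const_mul_atTop (by positivity : (0:ℝ) < c/2)
    have h1 : Tendsto (fun p : ℝ => α - p) (nhdsWithin α (Set.Iio α))
        (nhdsWithin 0 (Set.Ioi 0)) := by
      apply tendsto_nhdsWithin_of_tendsto_nhds_of_eventually_within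
      · have : Tendsto (fun p : ℝ => α - p) (nhds α) (nhds (α - α)) :=
          (continuous_const.sub continuous_id).tendsto α
        rw [sub_self] at this
        exact this.mono_left nhdsWithin_le_nhds
      · filter_upwards [self_mem_nhdsWithin] with p hp
        exact sub_pos.2 (Set.mem_Iio.1 hp)
    exact tendsto_inv_nhdsGT_zero.comp h1
  refine tendsto_atTop_mono' _ ?_ htend
  filter_upwards [Ioo_mem_nhdsLT_of_mem (⟨hp₀lt, le_refl α⟩ : α ∈ Set.Ioc p₀ α)] with p hp
  exact key p hp
end

section
/- For every α ∈ (0,2), ∫₀¹ (t^{α/2} − 1)(1 − t^{α/2−1})/(1−t)^{1+α} dt = 1/α. That is, γ(α, α/2) = 1/α. -/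
open Set MeasureTheory Filter Function intervalIntegral

theorem stmt10 (α : ℝ) (hα : α ∈ Set.Ioo (0:ℝ) 2) :
    (∫ t in Set.Ioo (0:ℝ) 1,
      (t ^ (α / 2) - 1) * (1 - t ^ (α / 2 - 1)) / (1 - t) ^ (1 + α)) = 1 / α := by
  obtain ⟨hα0, hα2⟩ := hα
  set p : ℝ := α / 2 with hp_def
  have hp : 0 < p := by positivity
  have hp1 : p < 1 := by simp only [hp_def]; linarith
  set φ : ℝ → ℝ := fun t => (t ^ p - 1) * (1 - t ^ (p - 1)) / (1 - t) ^ (1 + α) with hφ_def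
  set F : ℝ → ℝ := fun t => -(1 - t ^ p) ^ 2 / (2 * p) * (1 - t) ^ (-α) with hF_def
  -- derivative of F on Ioo 0 1
  have hF_deriv : ∀ t ∈ Ioo (0:ℝ) 1, HasDerivAt F (φ t) t := by
    intro t ht
    have ht0 : (0:ℝ) < t := ht.1
    have ht1 : t < 1 := ht.2
    have hu : (0:ℝ) < 1 - t := by linarith
    have h1 : HasDerivAt (fun s : ℝ => s ^ p) (p * t ^ (p - 1)) t :=
      Real.hasDerivAt_rpow_const (Or.inl ht0.ne')
    have h2 : HasDerivAt (fun s : ℝ => -(1 - s ^ p) ^ 2 / (2 * p))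
        (-(2 * (1 - t ^ p) * (-(p * t ^ (p - 1)))) / (2 * p)) t := by
      have := ((h1.const_sub 1).pow 2).neg.div_const (2 * p)
      refine this.congr_deriv ?_
      norm_num
    have h3 : HasDerivAt (fun s : ℝ => (1 - s) ^ (-α))
        ((-α) * (1 - t) ^ (-α - 1) * (-1)) t := by
      have hb : HasDerivAt (fun s : ℝ => 1 - s) (-1) t := (hasDerivAt_id t).const_sub 1
      exact (Real.hasDerivAt_rpow_const (x := 1 - t) (p := -α) (Or.inl hu.ne')).comp t hb
    have hd := h2.mul h3
    refine hd.congr_deriv ?_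
    have e1 : t ^ (p - 1) * t = t ^ p := by
      rw [← Real.rpow_add_one ht0.ne' (p - 1)]; ring_nf
    have e2 : (1 - t) ^ (-α - 1) * (1 - t) = (1 - t) ^ (-α) := by
      rw [← Real.rpow_add_one hu.ne' (-α - 1)]; ring_nf
    have e3 : ((1 - t) ^ (1 + α))⁻¹ = (1 - t) ^ (-α - 1) := by
      rw [← Real.rpow_neg hu.le]; ring_nf
    have hα2p : α = 2 * p := by simp [hp_def]; ring
    simp only [hφ_def, div_eq_mul_inv, e3]
    rw [← e2, ← e1]
    field_simp
    ring
  -- φ is nonnegative on Ioo 0 1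
  have hφ_nonneg : ∀ t ∈ Ioo (0:ℝ) 1, 0 ≤ φ t := by
    intro t ht
    have ht0 : (0:ℝ) < t := ht.1
    have ht1 : t ≤ 1 := ht.2.le
    have h1 : t ^ p ≤ 1 := Real.rpow_le_one ht0.le ht1 hp.le
    have h2 : 1 ≤ t ^ (p - 1) :=
      Real.one_le_rpow_of_pos_of_le_one_of_nonpos ht0 ht1 (by linarith)
    have h3 : (0:ℝ) < (1 - t) ^ (1 + α) := Real.rpow_pos_of_pos (by linarith [ht.2]) _
    apply div_nonneg _ h3.le
    nlinarith
  -- continuity of F on Ico 0 1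
  have hF_cont : ∀ t ∈ Ico (0:ℝ) 1, ContinuousAt F t := by
    intro t ht
    have hu : (1:ℝ) - t ≠ 0 := by have := ht.2; intro h; linarith [sub_eq_zero.mp h]
    have c1 : ContinuousAt (fun s : ℝ => s ^ p) t :=
      Real.continuousAt_rpow_const t p (Or.inr hp.le)
    have c2 : ContinuousAt (fun s : ℝ => (1 - s) ^ (-α)) t :=
      (Real.continuousAt_rpow_const (1 - t) (-α) (Or.inl hu)).comp
        ((continuous_const.sub continuous_id).continuousAt)
    exact (((c1.const_sub 1).pow 2).neg.div_const _).mul c2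
  -- limit of F at 1 from the left is 0
  have hF_lim1 : Tendsto F (nhdsWithin 1 (Iio 1)) (nhds 0) := by
    have hslope : Tendsto (fun t : ℝ => (1 - t ^ p) / (1 - t)) (nhdsWithin 1 (Iio 1)) (nhds p) := by
      have hd : HasDerivAt (fun s : ℝ => s ^ p) (p * (1:ℝ) ^ (p - 1)) 1 :=
        Real.hasDerivAt_rpow_const (Or.inl one_ne_zero)
      have hd' : HasDerivAt (fun s : ℝ => s ^ p) p 1 := by simpa using hd
      have := (hasDerivAt_iff_tendsto_slope.mp hd').mono_left
        (nhdsWithin_mono 1 (fun x hx => (ne_of_lt hx : x ≠ 1)))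
      refine this.congr (fun t => ?_)
      have hs : slope (fun s : ℝ => s ^ p) 1 t = (t ^ p - 1) / (t - 1) := by
        simp [slope_def_field]
      rw [hs, ← neg_div_neg_eq, neg_sub, neg_sub]
    have hpow : Tendsto (fun t : ℝ => (1 - t) ^ (2 - α)) (nhdsWithin 1 (Iio 1)) (nhds 0) := by
      have h1 : Tendsto (fun t : ℝ => 1 - t) (nhdsWithin 1 (Iio 1)) (nhds 0) := by
        have : Tendsto (fun t : ℝ => 1 - t) (nhds 1) (nhds 0) := by
          have h := (tendsto_const_nhds (x := (1:ℝ)) (f := nhds (1:ℝ))).sub tendsto_id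
          simpa using h
        exact this.mono_left nhdsWithin_le_nhds
      have h2 : Tendsto (fun x : ℝ => x ^ (2 - α)) (nhds 0) (nhds 0) := by
        have := (Real.continuousAt_rpow_const 0 (2 - α) (Or.inr (by linarith))).tendsto
        simpa [Real.zero_rpow (by linarith : (2:ℝ) - α ≠ 0)] using this
      exact h2.comp h1
    have key : Tendsto (fun t : ℝ => -((1 - t ^ p) / (1 - t)) ^ 2 / (2 * p) * (1 - t) ^ (2 - α))
        (nhdsWithin 1 (Iio 1)) (nhds 0) := by
      have := (((hslope.pow 2).neg.div_const (2 * p)).mul hpow)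
      simpa using this
    refine key.congr' ?_
    filter_upwards [Ioo_mem_nhdsLT_of_mem (show (1:ℝ) ∈ Ioc 0 1 by constructor <;> norm_num)]
      with t ht
    have ht0 : (0:ℝ) < t := ht.1
    have hu : (0:ℝ) < 1 - t := by linarith [ht.2]
    have e : (1 - t) ^ (2 - α) = (1 - t) ^ (2:ℕ) * (1 - t) ^ (-α) := by
      rw [← Real.rpow_natCast (1 - t) 2, ← Real.rpow_add hu]
      ring_nf
    simp only [hF_def]
    rw [e, div_pow]
    field_simp
  -- the continuous extension g
  set g : ℝ → ℝ := Function.update F 1 0 with hg_def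
  have hgF : ∀ t : ℝ, t ≠ 1 → g t = F t := fun t ht => Function.update_of_ne ht _ _
  have hg_deriv : ∀ t ∈ Ioo (0:ℝ) 1, HasDerivAt g (φ t) t := by
    intro t ht
    refine (hF_deriv t ht).congr_of_eventuallyEq ?_
    filter_upwards [Iio_mem_nhds ht.2] with s hs
    exact hgF s (ne_of_lt hs)
  have hg_cont : ContinuousOn g (Icc (0:ℝ) 1) := by
    intro t ht
    rcases eq_or_lt_of_le ht.2 with h1 | h1
    · -- t = 1
      rw [h1]
      have hlim : Tendsto g (nhdsWithin 1 (Iio 1)) (nhds 0) := by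
        refine hF_lim1.congr' ?_
        filter_upwards [self_mem_nhdsWithin] with s hs
        exact (hgF s (ne_of_lt hs)).symm
      have hg1 : g 1 = 0 := Function.update_self 1 0 F
      rw [← continuousWithinAt_diff_self]
      have hsub : Icc (0:ℝ) 1 \ {1} ⊆ Iio 1 := fun x hx => lt_of_le_of_ne hx.1.2 hx.2
      refine ContinuousWithinAt.mono ?_ hsub
      rw [ContinuousWithinAt, hg1]
      exact hlim
    · have hc : ContinuousAt g t := by
        refine (hF_cont t ⟨ht.1, h1⟩).congr ?_
        filter_upwards [Iio_mem_nhds h1] with s hs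
        exact (hgF s (ne_of_lt hs)).symm
      exact hc.continuousWithinAt
  -- integrability
  have hint : IntegrableOn φ (Ioc (0:ℝ) 1) :=
    intervalIntegral.integrableOn_deriv_of_nonneg hg_cont hg_deriv hφ_nonneg
  have hII : IntervalIntegrable φ volume 0 1 := by
    rw [intervalIntegrable_iff_integrableOn_Ioc_of_le zero_le_one]
    exact hint
  -- FTC
  have hFTC : ∫ t in (0:ℝ)..1, φ t = g 1 - g 0 :=
    intervalIntegral.integral_eq_sub_of_hasDeriv_right_of_le zero_le_one hg_cont
      (fun t ht => (hg_deriv t ht).hasDerivWithinAt) hII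
  have hg1 : g 1 = 0 := Function.update_self 1 0 F
  have hg0 : g 0 = -(1 / α) := by
    rw [hgF 0 (by norm_num)]
    show -(1 - (0:ℝ) ^ p) ^ 2 / (2 * p) * ((1:ℝ) - 0) ^ (-α) = -(1 / α)
    rw [Real.zero_rpow hp.ne', sub_zero, Real.one_rpow, hp_def]
    have : α ≠ 0 := hα0.ne'
    field_simp
  -- conclude
  have : ∫ t in Set.Ioo (0:ℝ) 1, φ t = 1 / α := by
    rw [← MeasureTheory.integral_Ioc_eq_integral_Ioo, ← intervalIntegral.integral_of_le zero_le_one,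
      hFTC, hg1, hg0]
    ring
  simpa [hφ_def] using this
end
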